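/- arXiv:1605.01656 — 4 statements merged into one kernel-verified Lean document; each statement's English description precedes it below -/
import Mathlib

section
/- (Tight bound for hard thresholding) Let b ∈ R^d be arbitrary and a ∈ R^d be K-sparse, and let k ≥ K. Define ρ = min{K, d−k} / (k − K + min{K, d−k}) and ν = 1 + (ρ + √((4+ρ)ρ))/2. Then ‖H_k(b) − a‖₂ ≤ √ν · ‖b − a‖₂. -/
open scoped BigOperators

/-- The ℓ₂ norm of a vector in `ℝ^d`. -/
noncomputable def l2norm {d : ℕ} (v : Fin d → ℝ) : ℝ := Real.sqrt (∑ i, v i ^ 2)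

set_option maxHeartbeats 1000000 in
/-- Tight bound for hard thresholding: for arbitrary `b ∈ ℝ^d`, `K`-sparse `a`,
and `k ≥ K`, with `ρ = min{K, d−k}/(k − K + min{K, d−k})` and
`ν = 1 + (ρ + √((4+ρ)ρ))/2`, one has `‖H_k(b) − a‖₂ ≤ √ν ‖b − a‖₂`. -/
theorem stmt_3 (d k K : ℕ) (hKk : K ≤ k) (hkd : k ≤ d) (b a : Fin d → ℝ)
    (Γ : Finset (Fin d)) (hcard : Γ.card = min k d)
    (htop : ∀ i ∈ Γ, ∀ j ∉ Γ, |b j| ≤ |b i|)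
    (ha : ∃ S : Finset (Fin d), S.card ≤ K ∧ ∀ i, a i ≠ 0 → i ∈ S)
    (ρ ν : ℝ)
    (hρ : ρ = (min K (d - k) : ℝ) / ((k : ℝ) - (K : ℝ) + (min K (d - k) : ℝ)))
    (hν : ν = 1 + (ρ + Real.sqrt ((4 + ρ) * ρ)) / 2) :
    l2norm (fun i => (if i ∈ Γ then b i else 0) - a i) ≤
      Real.sqrt ν * l2norm (fun i => b i - a i) := by
  obtain ⟨S, hScard, hSsupp⟩ := ha
  have haz : ∀ i, i ∉ S → a i = 0 := by
    intro i hi; by_contra h; exact hi (hSsupp i h)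
  have hΓcard : Γ.card = k := by rw [hcard, Nat.min_eq_left hkd]
  have hρ' : ρ = ((min K (d - k) : ℕ) : ℝ) /
      ((k : ℝ) - (K : ℝ) + ((min K (d - k) : ℕ) : ℝ)) := by
    rw [hρ, Nat.cast_min, Nat.cast_sub hkd]
  -- basic positivity facts about ρ and ν
  have hρ0 : 0 ≤ ρ := by
    rw [hρ']
    apply div_nonneg (Nat.cast_nonneg _)
    have h1 : (K : ℝ) ≤ (k : ℝ) := Nat.cast_le.mpr hKk
    have h2 := Nat.cast_nonneg (α := ℝ) (min K (d - k))
    linarith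
  have hsq : Real.sqrt ((4 + ρ) * ρ) ^ 2 = (4 + ρ) * ρ := by
    apply Real.sq_sqrt
    positivity
  have hν1 : 1 ≤ ν := by
    rw [hν]
    have := Real.sqrt_nonneg ((4 + ρ) * ρ)
    linarith
  set c : ℝ := (ρ + Real.sqrt ((4 + ρ) * ρ)) / 2 with hc
  have hc0 : 0 ≤ c := by
    have := Real.sqrt_nonneg ((4 + ρ) * ρ)
    rw [hc]; linarith
  have hνc : ν = 1 + c := hν
  have hc2 : c ^ 2 = ρ * (1 + c) := by
    rw [hc]; nlinarith [hsq]
  -- main sums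
  set T : Finset (Fin d) := S \ Γ with hTdef
  set G : Finset (Fin d) := Γ \ S with hGdef
  set P : ℝ := ∑ i ∈ Γ, (b i - a i) ^ 2 with hP
  set Q : ℝ := ∑ i ∈ Γᶜ, (a i) ^ 2 with hQ
  set R : ℝ := ∑ i ∈ Γᶜ, (b i - a i) ^ 2 with hR
  set X : ℝ := ∑ i ∈ T, (b i - a i) ^ 2 with hX
  set Y : ℝ := ∑ i ∈ T, (b i) ^ 2 with hY
  set U : ℝ := ∑ i ∈ G, (b i) ^ 2 with hU
  have hTsub : T ⊆ Γᶜ := by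
    intro i hi
    rw [Finset.mem_compl]
    exact (Finset.mem_sdiff.mp hi).2
  have hP0 : 0 ≤ P := Finset.sum_nonneg fun i _ => sq_nonneg _
  have hQ0 : 0 ≤ Q := Finset.sum_nonneg fun i _ => sq_nonneg _
  have hR0 : 0 ≤ R := Finset.sum_nonneg fun i _ => sq_nonneg _
  have hX0 : 0 ≤ X := Finset.sum_nonneg fun i _ => sq_nonneg _
  have hY0 : 0 ≤ Y := Finset.sum_nonneg fun i _ => sq_nonneg _
  have hU0 : 0 ≤ U := Finset.sum_nonneg fun i _ => sq_nonneg _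
  -- splitting the two squared norms
  have hSqH : ∑ i, ((if i ∈ Γ then b i else 0) - a i) ^ 2 = P + Q := by
    rw [← Finset.sum_add_sum_compl Γ fun i => ((if i ∈ Γ then b i else 0) - a i) ^ 2]
    congr 1
    · exact Finset.sum_congr rfl fun i hi => by rw [if_pos hi]
    · refine Finset.sum_congr rfl fun i hi => ?_
      rw [if_neg (Finset.mem_compl.mp hi)]
      ring
  have hSqb : ∑ i, (b i - a i) ^ 2 = P + R :=
    (Finset.sum_add_sum_compl Γ fun i => (b i - a i) ^ 2).symm
  -- Q is supported on T
  have hQT : Q = ∑ i ∈ T, (a i) ^ 2 := by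
    rw [hQ]
    refine (Finset.sum_subset hTsub fun i hi hni => ?_).symm
    have hiS : i ∉ S := by
      intro hiS
      exact hni (Finset.mem_sdiff.mpr ⟨hiS, Finset.mem_compl.mp hi⟩)
    rw [haz i hiS]; ring
  have hXR : X ≤ R :=
    Finset.sum_le_sum_of_subset_of_nonneg hTsub fun i _ _ => sq_nonneg _
  have hUP : U ≤ P := by
    have : U = ∑ i ∈ G, (b i - a i) ^ 2 := by
      refine Finset.sum_congr rfl fun i hi => ?_
      rw [haz i (Finset.mem_sdiff.mp hi).2]; ring
    rw [this]
    exact Finset.sum_le_sum_of_subset_of_nonneg (Finset.sdiff_subset) fun i _ _ => sq_nonneg _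
  -- key step : Q ≤ (1+c) * X + c * U
  have hkey : Q ≤ (1 + c) * X + c * U := by
    rcases T.eq_empty_or_nonempty with hTe | hTne
    · rw [hQT, hTe, Finset.sum_empty]
      positivity
    · -- cardinality facts
      set t : ℕ := T.card with ht
      have ht1 : 1 ≤ t := Finset.card_pos.mpr hTne
      have htK : t ≤ K := le_trans (Finset.card_le_card Finset.sdiff_subset) hScard
      have htdk : t ≤ d - k := by
        have h1 : t ≤ Γᶜ.card := Finset.card_le_card hTsub
        rw [Finset.card_compl, hΓcard, Fintype.card_fin] at h1
        exact h1
      have hGcard : k - K + t ≤ G.card := by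
        have h1 : G.card + (Γ ∩ S).card = k := by
          rw [hGdef, Finset.card_sdiff_add_card_inter, hΓcard]
        have h2 : t + (S ∩ Γ).card = S.card := by
          rw [ht, hTdef, Finset.card_sdiff_add_card_inter]
        have h3 : (Γ ∩ S).card = (S ∩ Γ).card := by rw [Finset.inter_comm]
        omega
      -- the max of b² on T
      obtain ⟨j0, hj0T, hj0max⟩ := Finset.exists_max_image T (fun j => (b j) ^ 2) hTne
      set M : ℝ := (b j0) ^ 2 with hM
      have hM0 : 0 ≤ M := sq_nonneg _
      have hYM : Y ≤ (t : ℝ) * M := by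
        have := Finset.sum_le_card_nsmul T (fun j => (b j) ^ 2) M hj0max
        rwa [nsmul_eq_mul] at this
      have hUM : ((k : ℝ) - K + t) * M ≤ U := by
        have hub : ∀ i ∈ G, M ≤ (b i) ^ 2 := by
          intro i hi
          have hiΓ : i ∈ Γ := (Finset.mem_sdiff.mp hi).1
          have hj0Γ : j0 ∉ Γ := (Finset.mem_sdiff.mp hj0T).2
          have habs := htop i hiΓ j0 hj0Γ
          calc M = |b j0| ^ 2 := by rw [sq_abs]
            _ ≤ |b i| ^ 2 := by
                exact pow_le_pow_left₀ (abs_nonneg _) habs 2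
            _ = (b i) ^ 2 := sq_abs _
        have h1 := Finset.card_nsmul_le_sum G (fun j => (b j) ^ 2) M hub
        rw [nsmul_eq_mul] at h1
        have h2 : ((k : ℝ) - K + t) ≤ (G.card : ℝ) := by
          have : ((k - K + t : ℕ) : ℝ) ≤ (G.card : ℝ) := Nat.cast_le.mpr hGcard
          push_cast at this
          rw [Nat.cast_sub hKk] at this
          linarith
        calc ((k : ℝ) - K + t) * M ≤ (G.card : ℝ) * M := by
              exact mul_le_mul_of_nonneg_right h2 hM0
          _ ≤ U := h1
      -- ρ dominates t/(k-K+t)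
      have hden : (0:ℝ) < (k : ℝ) - K + t := by
        have h1 : (K:ℝ) ≤ (k:ℝ) := Nat.cast_le.mpr hKk
        have h2 : (0:ℝ) < (t:ℝ) := by exact_mod_cast ht1
        linarith
      have hρt : (t : ℝ) ≤ ρ * ((k : ℝ) - K + t) := by
        set m : ℕ := min K (d - k) with hm
        have htm : t ≤ m := le_min htK htdk
        have hm1 : 1 ≤ m := le_trans ht1 htm
        have hdenm : (0:ℝ) < (k : ℝ) - K + m := by
          have h1 : (K:ℝ) ≤ (k:ℝ) := Nat.cast_le.mpr hKk
          have h2 : (0:ℝ) < (m:ℝ) := by exact_mod_cast hm1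
          linarith
        have htmR : (t:ℝ) ≤ (m:ℝ) := Nat.cast_le.mpr htm
        rw [hρ', div_mul_eq_mul_div, le_div_iff₀ hdenm]
        have hKkR : (K:ℝ) ≤ (k:ℝ) := Nat.cast_le.mpr hKk
        have h1 : (t:ℝ) * ((k:ℝ) - K) ≤ (m:ℝ) * ((k:ℝ) - K) :=
          mul_le_mul_of_nonneg_right htmR (by linarith)
        have e1 : (t:ℝ) * ((k:ℝ) - K + m) = (t:ℝ) * ((k:ℝ) - K) + (t:ℝ) * m := by ring
        have e2 : (m:ℝ) * ((k:ℝ) - K + t) = (m:ℝ) * ((k:ℝ) - K) + (t:ℝ) * m := by ring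
        rw [e1, e2]
        linarith
      -- Y ≤ ρ * U
      have hYρU : Y ≤ ρ * U := by
        have h1 : ρ * (((k : ℝ) - K + t) * M) ≤ ρ * U := mul_le_mul_of_nonneg_left hUM hρ0
        have h2 : (t : ℝ) * M ≤ ρ * (((k : ℝ) - K + t) * M) := by
          rw [← mul_assoc]
          exact mul_le_mul_of_nonneg_right hρt hM0
        linarith
      -- c is positive here
      have hρpos : 0 < ρ := by
        by_contra h
        push_neg at h
        have hρ0' : ρ = 0 := le_antisymm h hρ0
        rw [hρ0'] at hρt
        have : (0:ℝ) < (t:ℝ) := by exact_mod_cast ht1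
        linarith
      have hcpos : 0 < c := by
        rw [hc]
        have := Real.sqrt_nonneg ((4 + ρ) * ρ)
        linarith
      -- Cauchy-Schwarz on T
      set Z : ℝ := ∑ i ∈ T, (a i - b i) * b i with hZ
      have hCS : Z ^ 2 ≤ X * Y := by
        have := Finset.sum_mul_sq_le_sq_mul_sq T (fun i => a i - b i) (fun i => b i)
        have hXX : ∑ i ∈ T, (a i - b i) ^ 2 = X := by
          refine Finset.sum_congr rfl fun i _ => by ring
        rw [hXX] at this
        exact this
      have hQdecomp : Q = X + 2 * Z + Y := by
        rw [hQT, hX, hZ, hY, Finset.mul_sum, ← Finset.sum_add_distrib,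
          ← Finset.sum_add_distrib]
        exact Finset.sum_congr rfl fun i _ => by ring
      -- 2Z ≤ cX + Y/c  (via c²X + Y ≥ 2cZ)
      have hAMGM : 2 * c * Z ≤ c ^ 2 * X + Y := by
        have hZle : Z ≤ Real.sqrt X * Real.sqrt Y := by
          calc Z ≤ |Z| := le_abs_self Z
            _ = Real.sqrt (Z ^ 2) := (Real.sqrt_sq_eq_abs Z).symm
            _ ≤ Real.sqrt (X * Y) := Real.sqrt_le_sqrt hCS
            _ = Real.sqrt X * Real.sqrt Y := Real.sqrt_mul hX0 Y
        have hsX : Real.sqrt X ^ 2 = X := Real.sq_sqrt hX0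
        have hsY : Real.sqrt Y ^ 2 = Y := Real.sq_sqrt hY0
        have hexp := sq_nonneg (c * Real.sqrt X - Real.sqrt Y)
        have e : (c * Real.sqrt X - Real.sqrt Y) ^ 2 =
            c ^ 2 * Real.sqrt X ^ 2 - 2 * c * (Real.sqrt X * Real.sqrt Y)
              + Real.sqrt Y ^ 2 := by ring
        rw [e, hsX, hsY] at hexp
        have h2 : 2 * c * Z ≤ 2 * c * (Real.sqrt X * Real.sqrt Y) :=
          mul_le_mul_of_nonneg_left hZle (by linarith)
        linarith
      -- Y(1+c) ≤ c² U
      have hYU : Y * (1 + c) ≤ c ^ 2 * U := by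
        rw [hc2]
        calc Y * (1 + c) ≤ (ρ * U) * (1 + c) := by
              apply mul_le_mul_of_nonneg_right hYρU; linarith
          _ = ρ * (1 + c) * U := by ring
      -- combine, multiplying by c > 0
      have hmul : c * Q ≤ c * ((1 + c) * X + c * U) := by
        have e1 : c * Q = c * X + (2 * c * Z) + c * Y := by rw [hQdecomp]; ring
        have e2 : c * ((1 + c) * X + c * U) = c * X + c ^ 2 * X + c ^ 2 * U := by ring
        have e3 : Y * (1 + c) = Y + c * Y := by ring
        rw [e3] at hYU
        linarith [hAMGM, hYU]
      exact le_of_mul_le_mul_left hmul hcpos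
  -- assemble the squared inequality
  have hsqineq : ∑ i, ((if i ∈ Γ then b i else 0) - a i) ^ 2 ≤
      ν * ∑ i, (b i - a i) ^ 2 := by
    rw [hSqH, hSqb, hνc]
    have h1 : (1 + c) * X ≤ (1 + c) * R := by
      apply mul_le_mul_of_nonneg_left hXR; linarith
    have h2 : c * U ≤ c * P := mul_le_mul_of_nonneg_left hUP hc0
    have e : (1 + c) * (P + R) = P + ((1 + c) * R + c * P) := by ring
    rw [e]
    linarith [hkey, h1, h2]
  -- take square roots
  rw [l2norm, l2norm]
  rw [← Real.sqrt_mul (by linarith : (0:ℝ) ≤ ν)]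
  exact Real.sqrt_le_sqrt hsqineq
end

section
/- Let b ∈ R^d be s-sparse and a ∈ R^d be K-sparse with K ≤ k. If s ≤ k then H_k(b) = b and hence ‖H_k(b) − a‖₂ ≤ ‖b − a‖₂. If s > k, then ‖H_k(b) − a‖₂ ≤ √ν' ‖b − a‖₂ where ν' = 1 + (ρ' + √((4+ρ')ρ'))/2 and ρ' = min{K, s−k}/(k − K + min{K, s−k}). -/
/-!
Let `θ` separate `|b|` on `Γ` from `|b|` off `Γ`, and let `Ω ⊇ supp a` with `|Ω| ≤ K`.
Thresholding increases the squared error only on the set `J` of coordinates outside `Γ` where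
both `a` and `b` are nonzero, by at most `2θ|bᵢ - aᵢ| + θ²` on each; by Cauchy–Schwarz the total
increase is at most `2θ√(m C) + mθ²`, where `m = |J|` and `C = ∑_J (bᵢ - aᵢ)²`. On the other hand
`a` vanishes on `Γ \ Ω`, which has at least `q = k - K + m` elements, so `‖b - a‖² ≥ qθ² + C`.
Weighted AM–GM with weights `β - ρ` and `β`, where `ρ = m / q` and `β² = ρβ + ρ`, combines the
two estimates into `increase ≤ β ‖b - a‖²`. Finally `m ≤ min K (s - k)` by counting supports,
and `β` is monotone in `ρ`.
-/

open scoped BigOperators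

open Finset

-- The positive root `β` of `β ^ 2 = ρ * β + ρ`; the paper's `ν'` is `1 + tightFactor ρ'`.
noncomputable def tightFactor (ρ : ℝ) : ℝ := (ρ + √((4 + ρ) * ρ)) / 2

section tightFactor

variable {ρ : ℝ}

lemma tightFactor_nonneg (hρ : 0 ≤ ρ) : 0 ≤ tightFactor ρ := by
  unfold tightFactor; positivity

lemma le_tightFactor (hρ : 0 ≤ ρ) : ρ ≤ tightFactor ρ := by
  have : √(ρ ^ 2) ≤ √((4 + ρ) * ρ) := Real.sqrt_le_sqrt (by nlinarith)
  rw [Real.sqrt_sq hρ] at this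
  unfold tightFactor; linarith

lemma tightFactor_sq (hρ : 0 ≤ ρ) : tightFactor ρ ^ 2 = ρ * tightFactor ρ + ρ := by
  have := Real.sq_sqrt (by positivity : 0 ≤ (4 + ρ) * ρ)
  unfold tightFactor; linear_combination this / 4

lemma tightFactor_monotoneOn : MonotoneOn tightFactor (Set.Ici 0) := by
  intro ρ hρ ρ' hρ' h
  rw [Set.mem_Ici] at hρ hρ'
  have : √((4 + ρ) * ρ) ≤ √((4 + ρ') * ρ') := Real.sqrt_le_sqrt (by nlinarith)
  unfold tightFactor; linarith

end tightFactor

lemma two_mul_mul_sqrt_add_le_tightFactor_mul {m q θ C : ℝ} (hm : 0 ≤ m) (hmq : m ≤ q)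
    (hC : 0 ≤ C) :
    2 * θ * √(m * C) + m * θ ^ 2 ≤ tightFactor (m / q) * (q * θ ^ 2 + C) := by
  set ρ := m / q
  set β := tightFactor ρ
  have hρ : 0 ≤ ρ := div_nonneg hm (hm.trans hmq)
  have hρq : ρ * q = m := div_mul_cancel_of_imp fun hq => by linarith
  have hαβ : (β - ρ) * q * β = m := by
    rw [← hρq]; linear_combination q * tightFactor_sq hρ
  have hα : 0 ≤ (β - ρ) * q := mul_nonneg (by linarith [le_tightFactor hρ]) (hm.trans hmq)
  have hsqrt : √((β - ρ) * q) * √(β * C) = √(m * C) := by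
    rw [← Real.sqrt_mul hα, ← mul_assoc, hαβ]
  have hamgm : 2 * θ * √(m * C) ≤ (β - ρ) * q * θ ^ 2 + β * C := by
    have := sq_nonneg (√((β - ρ) * q) * θ - √(β * C))
    rw [sub_sq, mul_pow, Real.sq_sqrt hα,
      Real.sq_sqrt (mul_nonneg (tightFactor_nonneg hρ) hC)] at this
    rw [← hsqrt]; linarith
  calc 2 * θ * √(m * C) + m * θ ^ 2 ≤ (β - ρ) * q * θ ^ 2 + β * C + m * θ ^ 2 := by linarith
    _ = β * (q * θ ^ 2 + C) := by rw [← hρq]; ring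

lemma div_add_self_le_div_add_self {c m M : ℝ} (hc : 0 ≤ c) (hm : 0 ≤ m) (hmM : m ≤ M) :
    m / (c + m) ≤ M / (c + M) := by
  rcases hm.eq_or_lt with rfl | hm
  · simp only [zero_div]; positivity
  · rw [div_le_div_iff₀ (by linarith) (by linarith)]; nlinarith

lemma sq_sub_sq_sub_le {x y θ : ℝ} (hy : |y| ≤ θ) :
    x ^ 2 - (y - x) ^ 2 ≤ 2 * θ * |y - x| + θ ^ 2 := by
  have hx : |x| ≤ |y - x| + θ := by
    have := abs_sub y (y - x)
    rw [sub_sub_cancel] at this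
    linarith
  have := pow_le_pow_left₀ (abs_nonneg x) hx 2
  rw [sq_abs, add_sq, sq_abs] at this
  linarith

variable {ι : Type*}

lemma sum_sq_sub_sq_sub_le {J : Finset ι} {a b : ι → ℝ} {θ : ℝ} (hθ : 0 ≤ θ)
    (hb : ∀ i ∈ J, |b i| ≤ θ) :
    ∑ i ∈ J, (a i ^ 2 - (b i - a i) ^ 2) ≤
      2 * θ * √(#J * ∑ i ∈ J, (b i - a i) ^ 2) + #J * θ ^ 2 := by
  have hcs : ∑ i ∈ J, |b i - a i| ≤ √(#J * ∑ i ∈ J, (b i - a i) ^ 2) := by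
    apply Real.le_sqrt_of_sq_le
    simpa only [sq_abs] using sq_sum_le_card_mul_sum_sq (s := J) (f := fun i => |b i - a i|)
  calc ∑ i ∈ J, (a i ^ 2 - (b i - a i) ^ 2)
      ≤ ∑ i ∈ J, (2 * θ * |b i - a i| + θ ^ 2) :=
        sum_le_sum fun i hi => sq_sub_sq_sub_le (hb i hi)
    _ = 2 * θ * ∑ i ∈ J, |b i - a i| + #J * θ ^ 2 := by
      rw [sum_add_distrib, ← mul_sum, sum_const, nsmul_eq_mul]
    _ ≤ _ := by gcongr

lemma sum_sq_indicator_sub_le [Fintype ι] [DecidableEq ι] (Γ : Finset ι) (a b : ι → ℝ) :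
    ∑ i, ((Γ : Set ι).indicator b i - a i) ^ 2 ≤ ∑ i, (b i - a i) ^ 2 +
      ∑ i with i ∉ Γ ∧ a i ≠ 0 ∧ b i ≠ 0, (a i ^ 2 - (b i - a i) ^ 2) := by
  rw [sum_filter, ← sum_add_distrib]
  refine sum_le_sum fun i _ => ?_
  by_cases hi : i ∈ Γ
  · simp [hi]
  · rw [Set.indicator_of_notMem (by simpa using hi)]
    split_ifs with h
    · linarith
    · simp only [not_and_or, not_not, hi, false_or] at h
      rcases h with h | h <;> simp [h, sq_nonneg]

lemma card_mul_sq_add_sum_le [Fintype ι] [DecidableEq ι] {Γ Ω J : Finset ι} {a b : ι → ℝ}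
    {θ : ℝ} (hθ : 0 ≤ θ) (hΓ : ∀ i ∈ Γ, θ ≤ |b i|) (ha : ∀ i, a i ≠ 0 → i ∈ Ω) (hJ : Disjoint Γ J) :
    #(Γ \ Ω) * θ ^ 2 + ∑ i ∈ J, (b i - a i) ^ 2 ≤ ∑ i, (b i - a i) ^ 2 := by
  have hsq : ∀ i ∈ Γ \ Ω, θ ^ 2 ≤ (b i - a i) ^ 2 := by
    intro i hi
    obtain ⟨hiΓ, hiΩ⟩ := mem_sdiff.1 hi
    rw [not_imp_comm.1 (ha i) hiΩ, sub_zero, ← sq_abs (b i)]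
    exact pow_le_pow_left₀ hθ (hΓ i hiΓ) 2
  calc #(Γ \ Ω) * θ ^ 2 + ∑ i ∈ J, (b i - a i) ^ 2
      ≤ ∑ i ∈ Γ \ Ω, (b i - a i) ^ 2 + ∑ i ∈ J, (b i - a i) ^ 2 := by
        grw [← nsmul_eq_mul, card_nsmul_le_sum _ _ _ hsq]
    _ = ∑ i ∈ Γ \ Ω ∪ J, (b i - a i) ^ 2 :=
        (sum_union (disjoint_of_subset_left sdiff_subset hJ)).symm
    _ ≤ ∑ i, (b i - a i) ^ 2 := sum_le_univ_sum_of_nonneg fun i => sq_nonneg _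

lemma card_add_card_le_card_sdiff_add_card [DecidableEq ι] {Γ Ω J : Finset ι} (hJΩ : J ⊆ Ω)
    (hJ : Disjoint Γ J) : #Γ + #J ≤ #(Γ \ Ω) + #Ω := by
  rw [← card_union_of_disjoint hJ]
  calc #(Γ ∪ J) ≤ #(Γ \ Ω ∪ Ω) := by
        rw [sdiff_union_self_eq_union]; exact card_le_card (union_subset_union_right hJΩ)
    _ ≤ _ := card_union_le _ _

section top

variable {Γ : Finset ι} {b : ι → ℝ}

lemma exists_abs_separator [Fintype ι] [DecidableEq ι]
    (htop : ∀ i ∈ Γ, ∀ j ∉ Γ, |b j| ≤ |b i|) :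
    ∃ θ, 0 ≤ θ ∧ (∀ i ∈ Γ, θ ≤ |b i|) ∧ ∀ j ∉ Γ, |b j| ≤ θ := by
  refine ⟨((Γᶜ.sup fun j => ‖b j‖₊ : NNReal) : ℝ), NNReal.coe_nonneg _, fun i hi => ?_,
    fun j hj => ?_⟩
  · have : (Γᶜ.sup fun j => ‖b j‖₊) ≤ ‖b i‖₊ :=
      Finset.sup_le fun j hj => by
        rw [← NNReal.coe_le_coe, coe_nnnorm, coe_nnnorm]
        exact htop i hi j (mem_compl.1 hj)
    exact_mod_cast this
  · have : ‖b j‖₊ ≤ Γᶜ.sup fun j => ‖b j‖₊ :=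
      le_sup (f := fun j => ‖b j‖₊) (mem_compl.2 hj)
    exact_mod_cast this

lemma ne_zero_of_mem_of_ne_zero (htop : ∀ i ∈ Γ, ∀ j ∉ Γ, |b j| ≤ |b i|) {i j : ι} (hi : i ∈ Γ)
    (hj : j ∉ Γ) (hbj : b j ≠ 0) : b i ≠ 0 := by
  have := htop i hi j hj
  intro h
  rw [h, abs_zero] at this
  exact hbj (abs_nonpos_iff.1 this)

lemma support_subset_of_card_le [DecidableEq ι] (htop : ∀ i ∈ Γ, ∀ j ∉ Γ, |b j| ≤ |b i|)
    {S : Finset ι} (hbS : ∀ i, b i ≠ 0 → i ∈ S) (hSΓ : #S ≤ #Γ) : Function.support b ⊆ Γ := by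
  intro j hj
  by_contra hjΓ
  have hsub : insert j Γ ⊆ S :=
    insert_subset (hbS j hj) fun i hi => hbS i (ne_zero_of_mem_of_ne_zero htop hi hjΓ hj)
  have := card_le_card hsub
  rw [card_insert_of_notMem hjΓ] at this
  omega

lemma card_le_card_sub_card [DecidableEq ι] (htop : ∀ i ∈ Γ, ∀ j ∉ Γ, |b j| ≤ |b i|)
    {J S : Finset ι} (hJ : Disjoint Γ J) (hbJ : ∀ j ∈ J, b j ≠ 0) (hbS : ∀ i, b i ≠ 0 → i ∈ S) :
    #J ≤ #S - #Γ := by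
  rcases J.eq_empty_or_nonempty with rfl | ⟨j, hj⟩
  · simp
  · have hΓ : ∀ i ∈ Γ, b i ≠ 0 := fun i hi =>
      ne_zero_of_mem_of_ne_zero htop hi (disjoint_right.1 hJ hj) (hbJ j hj)
    have hsub : Γ ∪ J ⊆ S := union_subset (fun i hi => hbS i (hΓ i hi)) fun i hi => hbS i (hbJ i hi)
    have := card_le_card hsub
    rw [card_union_of_disjoint hJ] at this
    omega

end top

lemma sum_sq_sub_sq_sub_le_tightFactor_mul [Fintype ι] [DecidableEq ι] {Γ Ω J : Finset ι}
    {a b : ι → ℝ} {θ c : ℝ} (hθ : 0 ≤ θ) (hθΓ : ∀ i ∈ Γ, θ ≤ |b i|)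
    (hθJ : ∀ i ∈ J, |b i| ≤ θ) (haΩ : ∀ i, a i ≠ 0 → i ∈ Ω) (hJΓ : Disjoint Γ J) (hc : 0 ≤ c)
    (hcard : c + #J ≤ #(Γ \ Ω)) :
    ∑ i ∈ J, (a i ^ 2 - (b i - a i) ^ 2) ≤
      tightFactor (#J / (c + #J)) * ∑ i, (b i - a i) ^ 2 := by
  have hJ : (0 : ℝ) ≤ #J := Nat.cast_nonneg _
  calc ∑ i ∈ J, (a i ^ 2 - (b i - a i) ^ 2)
      ≤ 2 * θ * √(#J * ∑ i ∈ J, (b i - a i) ^ 2) + #J * θ ^ 2 := sum_sq_sub_sq_sub_le hθ hθJ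
    _ ≤ tightFactor (#J / (c + #J)) * ((c + #J) * θ ^ 2 + ∑ i ∈ J, (b i - a i) ^ 2) :=
      two_mul_mul_sqrt_add_le_tightFactor_mul hJ (by linarith)
        (sum_nonneg fun i _ => sq_nonneg _)
    _ ≤ tightFactor (#J / (c + #J)) * ∑ i, (b i - a i) ^ 2 := by
      gcongr
      · exact tightFactor_nonneg (by positivity)
      · grw [hcard]; exact card_mul_sq_add_sum_le hθ hθΓ haΩ hJΓ

theorem sum_sq_indicator_sub_le_of_sparse [Fintype ι] [DecidableEq ι] {k K s : ℕ}
    (hKk : K ≤ k) (hks : k ≤ s) {a b : ι → ℝ} {Γ Ω S : Finset ι} (hΓ : #Γ = k)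
    (htop : ∀ i ∈ Γ, ∀ j ∉ Γ, |b j| ≤ |b i|) (hS : #S ≤ s) (hbS : ∀ i, b i ≠ 0 → i ∈ S)
    (hΩ : #Ω ≤ K) (haΩ : ∀ i, a i ≠ 0 → i ∈ Ω) :
    ∑ i, ((Γ : Set ι).indicator b i - a i) ^ 2 ≤
      (1 + tightFactor (min (K : ℝ) (s - k) / (k - K + min (K : ℝ) (s - k)))) *
        ∑ i, (b i - a i) ^ 2 := by
  obtain ⟨θ, hθ, hθΓ, hθΓc⟩ := exists_abs_separator htop
  set J : Finset ι := {i | i ∉ Γ ∧ a i ≠ 0 ∧ b i ≠ 0}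
  have hJΓ : Disjoint Γ J := disjoint_right.2 fun i hi => (mem_filter.1 hi).2.1
  have hJΩ : J ⊆ Ω := fun i hi => haΩ i (mem_filter.1 hi).2.2.1
  have hJs : #J + k ≤ s := by
    have := card_le_card_sub_card htop hJΓ (fun i hi => (mem_filter.1 hi).2.2.2) hbS
    omega
  have hJK : #J ≤ K := (card_le_card hJΩ).trans hΩ
  have hKk' : (K : ℝ) ≤ k := by exact_mod_cast hKk
  have hcard : (k - K : ℝ) + #J ≤ #(Γ \ Ω) := by
    have := card_add_card_le_card_sdiff_add_card hJΩ hJΓ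
    have : (k + #J : ℝ) ≤ #(Γ \ Ω) + K := by exact_mod_cast hΓ ▸ this.trans (by omega)
    linarith
  have hJM : (#J : ℝ) ≤ min (K : ℝ) (s - k) := by
    simp only [le_min_iff, le_sub_iff_add_le]
    exact ⟨mod_cast hJK, mod_cast hJs⟩
  have hρ0 : (0 : ℝ) ≤ #J / (k - K + #J) := div_nonneg (Nat.cast_nonneg _) (by linarith)
  have hρ := div_add_self_le_div_add_self (sub_nonneg.2 hKk') (Nat.cast_nonneg _) hJM
  calc ∑ i, ((Γ : Set ι).indicator b i - a i) ^ 2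
      ≤ ∑ i, (b i - a i) ^ 2 + ∑ i ∈ J, (a i ^ 2 - (b i - a i) ^ 2) :=
        sum_sq_indicator_sub_le Γ a b
    _ ≤ ∑ i, (b i - a i) ^ 2 + tightFactor (#J / (k - K + #J)) * ∑ i, (b i - a i) ^ 2 := by
      grw [sum_sq_sub_sq_sub_le_tightFactor_mul hθ hθΓ
        (fun i hi => hθΓc i (mem_filter.1 hi).2.1) haΩ hJΓ (sub_nonneg.2 hKk') hcard]
    _ ≤ ∑ i, (b i - a i) ^ 2 +
          tightFactor (min (K : ℝ) (s - k) / (k - K + min (K : ℝ) (s - k))) *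
            ∑ i, (b i - a i) ^ 2 := by
      gcongr _ + ?_ * _
      exact tightFactor_monotoneOn hρ0 (hρ0.trans hρ) hρ
    _ = _ := by ring

theorem stmt_9_general (d k K s : ℕ) (hKk : K ≤ k) (hkd : k ≤ d)
    (b a : Fin d → ℝ)
    (Γ : Finset (Fin d)) (hcard : Γ.card = min k d)
    (htop : ∀ i ∈ Γ, ∀ j ∉ Γ, |b j| ≤ |b i|)
    (hb : ∃ S : Finset (Fin d), S.card ≤ s ∧ ∀ i, b i ≠ 0 → i ∈ S)
    (ha : ∃ S : Finset (Fin d), S.card ≤ K ∧ ∀ i, a i ≠ 0 → i ∈ S)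
    (ρ' ν' : ℝ)
    (hρ' : ρ' = (min K (s - k) : ℝ) / ((k : ℝ) - (K : ℝ) + (min K (s - k) : ℝ)))
    (hν' : ν' = 1 + (ρ' + Real.sqrt ((4 + ρ') * ρ')) / 2) :
    (s ≤ k → ((fun i => if i ∈ Γ then b i else 0) = b ∧
      l2norm (fun i => (if i ∈ Γ then b i else 0) - a i) ≤ l2norm (fun i => b i - a i))) ∧
    (k < s → l2norm (fun i => (if i ∈ Γ then b i else 0) - a i) ≤
      Real.sqrt ν' * l2norm (fun i => b i - a i)) := by
  obtain ⟨S, hS, hbS⟩ := hb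
  obtain ⟨Ω, hΩ, haΩ⟩ := ha
  have hΓ : #Γ = k := hcard.trans (min_eq_left hkd)
  have hH (i : Fin d) : (if i ∈ Γ then b i else 0) = (Γ : Set (Fin d)).indicator b i := by
    simp [Set.indicator_apply]
  simp only [hH]
  refine ⟨fun hsk => ?_, fun hks => ?_⟩
  · have hHb := Set.indicator_eq_self.2 (support_subset_of_card_le htop hbS (by omega))
    exact ⟨hHb, by rw [hHb]⟩
  · replace hν' : ν' = 1 + tightFactor ρ' := hν'
    unfold l2norm
    rw [← Real.sqrt_mul' _ (sum_nonneg fun i _ => sq_nonneg _), hν', hρ']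
    exact Real.sqrt_le_sqrt <|
      sum_sq_indicator_sub_le_of_sparse hKk hks.le hΓ htop hS hbS hΩ haΩ

/-- Refined tight bound when `b` is itself `s`-sparse: if `s ≤ k` then
`H_k(b) = b` and `‖H_k(b) − a‖₂ ≤ ‖b − a‖₂`; if `s > k` then
`‖H_k(b) − a‖₂ ≤ √ν' ‖b − a‖₂` with
`ρ' = min{K, s−k}/(k − K + min{K, s−k})` and `ν' = 1 + (ρ' + √((4+ρ')ρ'))/2`. -/
theorem stmt_9 (d k K s : ℕ) (hKk : K ≤ k) (hkd : k ≤ d) (hsd : s ≤ d)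
    (b a : Fin d → ℝ)
    (Γ : Finset (Fin d)) (hcard : Γ.card = min k d)
    (htop : ∀ i ∈ Γ, ∀ j ∉ Γ, |b j| ≤ |b i|)
    (hb : ∃ S : Finset (Fin d), S.card ≤ s ∧ ∀ i, b i ≠ 0 → i ∈ S)
    (ha : ∃ S : Finset (Fin d), S.card ≤ K ∧ ∀ i, a i ≠ 0 → i ∈ S)
    (ρ' ν' : ℝ)
    (hρ' : ρ' = (min K (s - k) : ℝ) / ((k : ℝ) - (K : ℝ) + (min K (s - k) : ℝ)))
    (hν' : ν' = 1 + (ρ' + Real.sqrt ((4 + ρ') * ρ')) / 2) :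
    (s ≤ k → ((fun i => if i ∈ Γ then b i else 0) = b ∧
      l2norm (fun i => (if i ∈ Γ then b i else 0) - a i) ≤ l2norm (fun i => b i - a i))) ∧
    (k < s → l2norm (fun i => (if i ∈ Γ then b i else 0) - a i) ≤
      Real.sqrt ν' * l2norm (fun i => b i - a i)) :=
  stmt_9_general d k K s hKk hkd b a Γ hcard htop hb ha ρ' ν' hρ' hν'
end

section
/- Let b ∈ R^d, let a ∈ R^d be K-sparse, and let K ≤ k ≤ d. Then ‖H_k(b) − a‖₂ ≤ (1 + √((d−k)/(d−K))) ‖b − a‖₂. -/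
open scoped BigOperators

lemma l2norm_eq_norm {d : ℕ} (v : Fin d → ℝ) :
    l2norm v = ‖(WithLp.equiv 2 (Fin d → ℝ)).symm v‖ := by
  rw [EuclideanSpace.norm_eq]
  simp [l2norm, sq_abs]

lemma l2norm_add_le {d : ℕ} (x y : Fin d → ℝ) :
    l2norm (fun i => x i + y i) ≤ l2norm x + l2norm y := by
  simp only [l2norm_eq_norm]
  exact norm_add_le ((WithLp.equiv 2 (Fin d → ℝ)).symm x) ((WithLp.equiv 2 (Fin d → ℝ)).symm y)

lemma key {d k K : ℕ} (hKk : K ≤ k) (hkd : k ≤ d) (b : Fin d → ℝ)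
    (Γ S : Finset (Fin d)) (hcard : Γ.card = k) (hS : S.card ≤ K)
    (htop : ∀ i ∈ Γ, ∀ j ∉ Γ, |b j| ≤ |b i|) :
    ((d:ℝ) - K) * ∑ i ∈ Γᶜ, b i ^ 2 ≤ ((d:ℝ) - k) * ∑ i ∈ Sᶜ, b i ^ 2 := by
  rcases Γ.eq_empty_or_nonempty with hΓ | hΓ
  · -- k = 0, K = 0, S = ∅
    subst hΓ
    simp only [Finset.card_empty] at hcard
    have hk0 : k = 0 := hcard.symm
    have hK0 : K = 0 := le_antisymm (hk0 ▸ hKk) (Nat.zero_le _)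
    have hSe : S = ∅ := Finset.card_eq_zero.mp (le_antisymm (hK0 ▸ hS) (Nat.zero_le _))
    subst hSe
    simp [hk0, hK0]
  · obtain ⟨i₀, hi₀Γ, hi₀⟩ := Γ.exists_min_image (fun i => |b i|) hΓ
    set m2 : ℝ := b i₀ ^ 2 with hm2
    have hm2nn : 0 ≤ m2 := sq_nonneg _
    set A := Γᶜ \ S with hA
    set B := Γᶜ ∩ S with hB
    set C := Γ \ S with hC
    set X := ∑ i ∈ A, b i ^ 2 with hX
    set Y := ∑ i ∈ B, b i ^ 2 with hY
    set Z := ∑ i ∈ C, b i ^ 2 with hZ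
    -- sum splits
    have hsplit : ∑ i ∈ Γᶜ, b i ^ 2 = Y + X := by
      rw [hY, hX, hA, hB, Finset.sum_inter_add_sum_sdiff]
    -- cards
    have hABcard : A.card + B.card = d - k := by
      rw [hA, hB, add_comm]
      rw [Finset.card_inter_add_card_sdiff]
      rw [Finset.card_compl, hcard, Fintype.card_fin]
    have hCcard : k + B.card ≤ C.card + K := by
      have h1 : C.card + (Γ ∩ S).card = k := by
        rw [hC, add_comm, Finset.card_inter_add_card_sdiff, hcard]
      have h2 : (Γ ∩ S).card + B.card ≤ K := by
        rw [hB]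
        calc (Γ ∩ S).card + (Γᶜ ∩ S).card = (S ∩ Γ).card + (S \ Γ).card := by
              congr 1
              · rw [Finset.inter_comm]
              · rw [Finset.inter_comm]
                congr 1
                ext x
                simp [and_comm]
          _ = S.card := Finset.card_inter_add_card_sdiff S Γ
          _ ≤ K := hS
      omega
    -- term bounds
    have hsq : ∀ j, j ∉ Γ → b j ^ 2 ≤ m2 := by
      intro j hj
      rw [hm2, ← sq_abs (b j), ← sq_abs (b i₀)]
      exact pow_le_pow_left₀ (abs_nonneg _) (htop i₀ hi₀Γ j hj) 2
    have hsq' : ∀ i ∈ Γ, m2 ≤ b i ^ 2 := by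
      intro i hi
      rw [hm2, ← sq_abs (b i), ← sq_abs (b i₀)]
      exact pow_le_pow_left₀ (abs_nonneg _) (hi₀ i hi) 2
    have hXle : X ≤ (A.card : ℝ) * m2 := by
      rw [hX]
      calc ∑ i ∈ A, b i ^ 2 ≤ ∑ _i ∈ A, m2 :=
            Finset.sum_le_sum (fun i hi => hsq i (Finset.mem_compl.mp (Finset.mem_sdiff.mp hi).1))
        _ = (A.card : ℝ) * m2 := by rw [Finset.sum_const, nsmul_eq_mul]
    have hYle : Y ≤ (B.card : ℝ) * m2 := by
      rw [hY]
      calc ∑ i ∈ B, b i ^ 2 ≤ ∑ _i ∈ B, m2 :=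
            Finset.sum_le_sum (fun i hi => hsq i (Finset.mem_compl.mp (Finset.mem_inter.mp hi).1))
        _ = (B.card : ℝ) * m2 := by rw [Finset.sum_const, nsmul_eq_mul]
    have hZge : (C.card : ℝ) * m2 ≤ Z := by
      rw [hZ]
      calc (C.card : ℝ) * m2 = ∑ _i ∈ C, m2 := by rw [Finset.sum_const, nsmul_eq_mul]
        _ ≤ ∑ i ∈ C, b i ^ 2 :=
            Finset.sum_le_sum (fun i hi => hsq' i (Finset.mem_sdiff.mp hi).1)
    -- Sᶜ ⊇ A ∪ C, disjoint
    have hXZ : X + Z ≤ ∑ i ∈ Sᶜ, b i ^ 2 := by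
      have hdisj : Disjoint A C := by
        apply Finset.disjoint_left.mpr
        intro x hx hxC
        exact (Finset.mem_compl.mp (Finset.mem_sdiff.mp hx).1) (Finset.mem_sdiff.mp hxC).1
      have hsub : A ∪ C ⊆ Sᶜ := by
        intro x hx
        rcases Finset.mem_union.mp hx with h | h
        · exact Finset.mem_compl.mpr (fun hxS => (Finset.mem_sdiff.mp h).2 hxS)
        · exact Finset.mem_compl.mpr (fun hxS => (Finset.mem_sdiff.mp h).2 hxS)
      calc X + Z = ∑ i ∈ A ∪ C, b i ^ 2 := (Finset.sum_union hdisj).symm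
        _ ≤ ∑ i ∈ Sᶜ, b i ^ 2 :=
            Finset.sum_le_sum_of_subset_of_nonneg hsub (fun i _ _ => sq_nonneg _)
    -- cast cards to ℝ
    have hABr : (A.card : ℝ) + B.card = (d : ℝ) - k := by
      have h' : ((A.card : ℝ) + B.card) = ((d - k : ℕ) : ℝ) := by exact_mod_cast hABcard
      rw [h', Nat.cast_sub hkd]
    have hCr : (k : ℝ) + B.card ≤ (C.card : ℝ) + K := by exact_mod_cast hCcard
    have hKkr : (K : ℝ) ≤ k := by exact_mod_cast hKk
    have hkdr : (k : ℝ) ≤ d := by exact_mod_cast hkd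
    rw [hsplit]
    nlinarith [mul_nonneg (sub_nonneg.mpr hKkr) hm2nn, mul_nonneg (sub_nonneg.mpr hkdr) hm2nn,
      mul_le_mul_of_nonneg_left hXle (sub_nonneg.mpr hKkr),
      mul_le_mul_of_nonneg_left hYle (sub_nonneg.mpr hKkr),
      mul_le_mul_of_nonneg_left hYle (sub_nonneg.mpr hkdr),
      mul_le_mul_of_nonneg_left hZge (sub_nonneg.mpr hkdr),
      mul_le_mul_of_nonneg_left hXZ (sub_nonneg.mpr hkdr)]

/-- Dimension-dependent bound obtained from the triangle inequality and Lemma 1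
of Jain et al. 2014: for `K`-sparse `a` and `K ≤ k ≤ d`,
`‖H_k(b) − a‖₂ ≤ (1 + √((d−k)/(d−K))) ‖b − a‖₂`. -/
theorem stmt_10 (d k K : ℕ) (hKk : K ≤ k) (hkd : k ≤ d) (b a : Fin d → ℝ)
    (Γ : Finset (Fin d)) (hcard : Γ.card = min k d)
    (htop : ∀ i ∈ Γ, ∀ j ∉ Γ, |b j| ≤ |b i|)
    (ha : ∃ S : Finset (Fin d), S.card ≤ K ∧ ∀ i, a i ≠ 0 → i ∈ S) :
    l2norm (fun i => (if i ∈ Γ then b i else 0) - a i) ≤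
      (1 + Real.sqrt (((d : ℝ) - (k : ℝ)) / ((d : ℝ) - (K : ℝ)))) *
        l2norm (fun i => b i - a i) := by
  obtain ⟨S, hS, hSsupp⟩ := ha
  have hcard' : Γ.card = k := by rw [hcard, min_eq_left hkd]
  by_cases hdK : K = d
  · -- K = d forces k = d, Γ = univ
    have hk : k = d := le_antisymm hkd (hdK ▸ hKk)
    have hΓu : Γ = Finset.univ := by
      apply Finset.eq_univ_of_card
      rw [hcard', hk, Fintype.card_fin]
    have hcoef : Real.sqrt (((d : ℝ) - k) / ((d : ℝ) - K)) = 0 := by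
      rw [hk, hdK]; simp
    rw [hcoef, hΓu]
    simp
  · have hKd : K < d := lt_of_le_of_ne (hKk.trans hkd) hdK
    have hdKpos : (0 : ℝ) < (d : ℝ) - K := by
      have : (K : ℝ) < d := by exact_mod_cast hKd
      linarith
    set ρ : ℝ := ((d : ℝ) - k) / ((d : ℝ) - K) with hρ
    have hρnn : 0 ≤ ρ := by
      apply div_nonneg _ (le_of_lt hdKpos)
      have : (k : ℝ) ≤ d := by exact_mod_cast hkd
      linarith
    set L := l2norm (fun i => b i - a i) with hL
    have hLnn : 0 ≤ L := Real.sqrt_nonneg _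
    -- triangle inequality
    have htri : l2norm (fun i => (if i ∈ Γ then b i else 0) - a i) ≤
        l2norm (fun i => (if i ∈ Γ then b i else 0) - b i) + L := by
      have := l2norm_add_le (fun i => (if i ∈ Γ then b i else 0) - b i)
        (fun i => b i - a i)
      convert this using 2
      funext i
      ring
    -- the hard-thresholding error term
    have herr : l2norm (fun i => (if i ∈ Γ then b i else 0) - b i) ≤ Real.sqrt ρ * L := by
      have hsum1 : (∑ i, ((if i ∈ Γ then b i else 0) - b i) ^ 2) = ∑ i ∈ Γᶜ, b i ^ 2 := by
        rw [← Finset.sum_compl_add_sum Γ]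
        have h1 : ∀ i ∈ Γᶜ, ((if i ∈ Γ then b i else 0) - b i) ^ 2 = b i ^ 2 := by
          intro i hi
          rw [if_neg (Finset.mem_compl.mp hi)]
          ring
        have h2 : ∀ i ∈ Γ, ((if i ∈ Γ then b i else 0) - b i) ^ 2 = 0 := by
          intro i hi
          rw [if_pos hi]
          ring
        rw [Finset.sum_congr rfl h1, Finset.sum_congr rfl h2]
        simp
      have hsum2 : (∑ i ∈ Sᶜ, b i ^ 2) ≤ ∑ i, (b i - a i) ^ 2 := by
        calc (∑ i ∈ Sᶜ, b i ^ 2) = ∑ i ∈ Sᶜ, (b i - a i) ^ 2 := by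
              apply Finset.sum_congr rfl
              intro i hi
              have hai : a i = 0 := by
                by_contra h
                exact Finset.mem_compl.mp hi (hSsupp i h)
              rw [hai, sub_zero]
          _ ≤ ∑ i, (b i - a i) ^ 2 :=
              Finset.sum_le_sum_of_subset_of_nonneg (Finset.subset_univ _)
                (fun i _ _ => sq_nonneg _)
      have hkey := key hKk hkd b Γ S hcard' hS htop
      have hmain : (∑ i ∈ Γᶜ, b i ^ 2) ≤ ρ * ∑ i, (b i - a i) ^ 2 := by
        rw [hρ, div_mul_eq_mul_div, le_div_iff₀ hdKpos]
        calc (∑ i ∈ Γᶜ, b i ^ 2) * ((d:ℝ) - K) = ((d:ℝ) - K) * ∑ i ∈ Γᶜ, b i ^ 2 := by ring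
          _ ≤ ((d:ℝ) - k) * ∑ i ∈ Sᶜ, b i ^ 2 := hkey
          _ ≤ ((d:ℝ) - k) * ∑ i, (b i - a i) ^ 2 := by
              apply mul_le_mul_of_nonneg_left hsum2
              have : (k : ℝ) ≤ d := by exact_mod_cast hkd
              linarith
      calc l2norm (fun i => (if i ∈ Γ then b i else 0) - b i)
          = Real.sqrt (∑ i ∈ Γᶜ, b i ^ 2) := by rw [l2norm, hsum1]
        _ ≤ Real.sqrt (ρ * ∑ i, (b i - a i) ^ 2) := Real.sqrt_le_sqrt hmain
        _ = Real.sqrt ρ * L := by rw [Real.sqrt_mul hρnn, hL, l2norm]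
    calc l2norm (fun i => (if i ∈ Γ then b i else 0) - a i)
        ≤ l2norm (fun i => (if i ∈ Γ then b i else 0) - b i) + L := htri
      _ ≤ Real.sqrt ρ * L + L := by linarith
      _ = (1 + Real.sqrt ρ) * L := by ring
end

section
/- Let L ≥ α > 0, let 0 < η < 1/(4L), and suppose 1 < ν < 4L/(4L−α). Then the quadratic condition 4ναL η² − 2να η + ν − 1 < 0 has a nonempty set of feasible step sizes η ∈ (0, 1/(4L)); moreover the feasibility of this system requires ν < 4L/(4L−α), so that the expansion factor √ν must be below √(4L/(4L−α)) ≤ √(4/3) ≈ 1.1547. -/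
/-- Feasibility condition in the HT-SVRG convergence analysis: for `L ≥ α > 0`
and `1 < ν < 4L/(4L−α)`, there is a feasible step size `η ∈ (0, 1/(4L))` with
`4ναLη² − 2ναη + ν − 1 < 0`; moreover `4L/(4L−α) ≤ 4/3`, so the expansion
factor must satisfy `√ν < √(4L/(4L−α)) ≤ √(4/3)`. -/
theorem stmt_18 (L α ν : ℝ) (hα : 0 < α) (hL : α ≤ L)
    (hν₁ : 1 < ν) (hν₂ : ν < 4 * L / (4 * L - α)) :
    (∃ η : ℝ, 0 < η ∧ η < 1 / (4 * L) ∧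
      4 * ν * α * L * η ^ 2 - 2 * ν * α * η + ν - 1 < 0) ∧
    Real.sqrt ν < Real.sqrt (4 * L / (4 * L - α)) ∧
    Real.sqrt (4 * L / (4 * L - α)) ≤ Real.sqrt (4 / 3) := by
  have hL0 : 0 < L := lt_of_lt_of_le hα hL
  have h4L : 0 < 4 * L - α := by nlinarith
  have key : ν * (4 * L - α) < 4 * L := (lt_div_iff₀ h4L).mp hν₂
  have hνα : 0 < ν * α := by positivity
  refine ⟨⟨(ν - 1) / (ν * α), div_pos (by linarith) hνα, ?_, ?_⟩, ?_, ?_⟩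
  · rw [div_lt_div_iff₀ hνα (by linarith : (0:ℝ) < 4 * L)]
    nlinarith
  · have h : (ν - 1) / (ν * α) * (ν * α) = ν - 1 := div_mul_cancel₀ _ (ne_of_gt hνα)
    have hlt : 4 * L * (ν - 1) < ν * α := by nlinarith
    have hpos : 0 < ν - 1 := by linarith
    have hq : 4 * ν * α * L * ((ν - 1) / (ν * α)) ^ 2 - 2 * ν * α * ((ν - 1) / (ν * α)) + ν - 1 = (ν - 1) * (4 * L * (ν - 1) - ν * α) / (ν * α) := by
      field_simp
      ring
    rw [hq]
    have hnum : (ν - 1) * (4 * L * (ν - 1) - ν * α) < 0 := by nlinarith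
    exact div_neg_of_neg_of_pos hnum hνα
  · exact Real.sqrt_lt_sqrt (by linarith) hν₂
  · apply Real.sqrt_le_sqrt
    rw [div_le_div_iff₀ h4L (by norm_num : (0:ℝ) < 3)]
    nlinarith
end
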